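/- arXiv:1510.02324 — 2 statements merged into one kernel-verified Lean document; each statement's English description precedes it below -/
import Mathlib

section
/- Let G be a (banner, C5)-free graph with an odd antihole A such that no co-triangle of G contains two vertices of A. Then for every co-triangle C whose three vertices all lie outside A, some vertex of A is adjacent to all three vertices of C. -/
open SimpleGraph

/-- The banner: a chordless 4-cycle 0-1-2-3-0 together with a fifth vertex 4
adjacent to exactly one vertex (vertex 0) of the cycle. -/
def banner : SimpleGraph (Fin 5) :=
  SimpleGraph.fromRel (fun i j =>
    (i = 0 ∧ j = 1) ∨ (i = 1 ∧ j = 2) ∨ (i = 2 ∧ j = 3) ∨ (i = 3 ∧ j = 0) ∨ (i = 0 ∧ j = 4))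

/-- A graph is banner-free if it has no induced subgraph isomorphic to the banner. -/
def BannerFree {V : Type*} (G : SimpleGraph V) : Prop := ¬ Nonempty (banner ↪g G)

/-- A graph is C5-free if it has no induced subgraph isomorphic to the chordless 5-cycle. -/
def C5Free {V : Type*} (G : SimpleGraph V) : Prop :=
  ¬ Nonempty (SimpleGraph.cycleGraph 5 ↪g G)

/-- A graph is odd-hole-free if it has no induced chordless cycle of odd length `n ≥ 5`
(odd holes are the odd chordless cycles with at least four, hence at least five, vertices). -/
def OddHoleFree {V : Type*} (G : SimpleGraph V) : Prop :=
  ∀ n : ℕ, 5 ≤ n → Odd n → ¬ Nonempty (SimpleGraph.cycleGraph n ↪g G)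

/-- `A` is an odd antihole of `G`: the subgraph induced by `A` is isomorphic to the
complement of a chordless cycle on an odd number `n ≥ 5` of vertices. -/
def IsOddAntihole {V : Type*} (G : SimpleGraph V) (A : Set V) : Prop :=
  ∃ n : ℕ, 5 ≤ n ∧ Odd n ∧ Nonempty ((SimpleGraph.cycleGraph n)ᶜ ≃g G.induce A)

/-- `H` is a homogeneous set of `G`: `2 ≤ |H| < |V(G)|` and every vertex outside `H`
is adjacent to all vertices of `H` or to none of them. -/
def IsHomogeneous {V : Type*} (G : SimpleGraph V) (H : Set V) : Prop :=
  2 ≤ H.ncard ∧ H ≠ Set.univ ∧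
    ∀ v ∉ H, (∀ h ∈ H, G.Adj v h) ∨ (∀ h ∈ H, ¬ G.Adj v h)

/-- A graph is perfect if every induced subgraph has chromatic number equal to
its clique number. -/
def IsPerfect {V : Type*} (G : SimpleGraph V) : Prop :=
  ∀ S : Set V, (G.induce S).chromaticNumber = ((G.induce S).cliqueNum : ℕ∞)

/-- A graph is perfectly divisible if every induced subgraph `G[S]` contains a set `X`
of vertices meeting all largest cliques of `G[S]` and inducing a perfect graph. -/
def PerfectlyDivisible {V : Type*} (G : SimpleGraph V) : Prop :=
  ∀ S : Set V, ∃ X ⊆ S, IsPerfect (G.induce X) ∧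
    ∀ t : Finset V, ↑t ⊆ S → G.IsNClique ((G.induce S).cliqueNum) t → ∃ x ∈ X, x ∈ t

/-- A graph is `k`-divisible if the vertex set of each of its induced subgraphs `G[S]`
having at least one edge can be partitioned into `k` sets, none of which contains a
clique of size `ω(G[S])`.  (A graph with no edges is trivially `k`-divisible.) -/
def KDivisible {V : Type*} (G : SimpleGraph V) (k : ℕ) : Prop :=
  ∀ S : Set V, (∃ a ∈ S, ∃ b ∈ S, G.Adj a b) →
    ∃ P : Fin k → Set V, (∀ v ∈ S, ∃! i, v ∈ P i) ∧
      ∀ i, P i ⊆ S ∧ ¬ ∃ t : Finset V, ↑t ⊆ P i ∧ G.IsNClique ((G.induce S).cliqueNum) t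

/-- The maximum total weight `α_w(G)` of a stable (independent) set of the weighted
graph `G`; stable sets of `G` are exactly the cliques of the complement of `G`. -/
noncomputable def alphaW {V : Type*} (G : SimpleGraph V) (w : V → ℤ) : ℤ :=
  sSup {x : ℤ | ∃ s : Finset V, Gᶜ.IsClique (↑s : Set V) ∧ x = ∑ v ∈ s, w v}

/-- `C` is a clique cutset of the connected graph `G` if `C` is a clique and
deleting `C` from `G` leaves a disconnected graph. -/
def IsCliqueCutset {V : Type*} (G : SimpleGraph V) (C : Set V) : Prop :=
  G.Connected ∧ G.IsClique C ∧ ¬ (G.induce Cᶜ).Preconnected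

instance : DecidableRel banner.Adj := fun a b =>
  decidable_of_iff _ (SimpleGraph.fromRel_adj _ a b).symm

private def emb5 {V : Type*} (G : SimpleGraph V) (H : SimpleGraph (Fin 5)) (g : Fin 5 → V)
    (hinj : ∀ u v : Fin 5, u ≠ v → g u ≠ g v)
    (hmap : ∀ u v : Fin 5, u ≠ v → (G.Adj (g u) (g v) ↔ H.Adj u v)) : H ↪g G where
  toFun := g
  inj' := fun u v h => by by_contra hne; exact hinj u v hne h
  map_rel_iff' := @fun u v => by
    rcases eq_or_ne u v with rfl | hne
    · constructor
      · intro h; exact absurd h (G.irrefl)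
      · intro h; exact absurd h (H.irrefl)
    · exact hmap u v hne

private def buildC5 {V : Type*} (G : SimpleGraph V) (v0 v1 v2 v3 v4 : V)
    (h01 : G.Adj v0 v1) (h12 : G.Adj v1 v2) (h23 : G.Adj v2 v3) (h34 : G.Adj v3 v4)
    (h40 : G.Adj v4 v0)
    (n02 : ¬ G.Adj v0 v2) (n03 : ¬ G.Adj v0 v3) (n13 : ¬ G.Adj v1 v3)
    (n14 : ¬ G.Adj v1 v4) (n24 : ¬ G.Adj v2 v4)
    (d01 : v0 ≠ v1) (d02 : v0 ≠ v2) (d03 : v0 ≠ v3) (d04 : v0 ≠ v4)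
    (d12 : v1 ≠ v2) (d13 : v1 ≠ v3) (d14 : v1 ≠ v4)
    (d23 : v2 ≠ v3) (d24 : v2 ≠ v4) (d34 : v3 ≠ v4) :
    cycleGraph 5 ↪g G := by
  have hs01 := h01.symm; have hs12 := h12.symm; have hs23 := h23.symm
  have hs34 := h34.symm; have hs40 := h40.symm
  have m02 : ¬ G.Adj v2 v0 := fun h => n02 h.symm
  have m03 : ¬ G.Adj v3 v0 := fun h => n03 h.symm
  have m13 : ¬ G.Adj v3 v1 := fun h => n13 h.symm
  have m14 : ¬ G.Adj v4 v1 := fun h => n14 h.symm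
  have m24 : ¬ G.Adj v4 v2 := fun h => n24 h.symm
  have e01 := d01.symm; have e02 := d02.symm; have e03 := d03.symm
  have e04 := d04.symm; have e12 := d12.symm; have e13 := d13.symm
  have e14 := d14.symm; have e23 := d23.symm; have e24 := d24.symm
  have e34 := d34.symm
  apply emb5 G _ ![v0, v1, v2, v3, v4]
  · intro u v huv
    fin_cases u <;> fin_cases v <;> simp_all
  · intro u v huv
    fin_cases u <;> fin_cases v <;> simp_all <;> decide

private def buildBanner {V : Type*} (G : SimpleGraph V) (v0 v1 v2 v3 v4 : V)
    (h01 : G.Adj v0 v1) (h12 : G.Adj v1 v2) (h23 : G.Adj v2 v3) (h30 : G.Adj v3 v0)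
    (h04 : G.Adj v0 v4)
    (n02 : ¬ G.Adj v0 v2) (n13 : ¬ G.Adj v1 v3)
    (n14 : ¬ G.Adj v1 v4) (n24 : ¬ G.Adj v2 v4) (n34 : ¬ G.Adj v3 v4)
    (d01 : v0 ≠ v1) (d02 : v0 ≠ v2) (d03 : v0 ≠ v3) (d04 : v0 ≠ v4)
    (d12 : v1 ≠ v2) (d13 : v1 ≠ v3) (d14 : v1 ≠ v4)
    (d23 : v2 ≠ v3) (d24 : v2 ≠ v4) (d34 : v3 ≠ v4) :
    banner ↪g G := by
  have hs01 := h01.symm; have hs12 := h12.symm; have hs23 := h23.symm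
  have hs30 := h30.symm; have hs04 := h04.symm
  have m02 : ¬ G.Adj v2 v0 := fun h => n02 h.symm
  have m13 : ¬ G.Adj v3 v1 := fun h => n13 h.symm
  have m14 : ¬ G.Adj v4 v1 := fun h => n14 h.symm
  have m24 : ¬ G.Adj v4 v2 := fun h => n24 h.symm
  have m34 : ¬ G.Adj v4 v3 := fun h => n34 h.symm
  have e01 := d01.symm; have e02 := d02.symm; have e03 := d03.symm
  have e04 := d04.symm; have e12 := d12.symm; have e13 := d13.symm
  have e14 := d14.symm; have e23 := d23.symm; have e24 := d24.symm
  have e34 := d34.symm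
  apply emb5 G _ ![v0, v1, v2, v3, v4]
  · intro u v huv
    fin_cases u <;> fin_cases v <;> simp_all
  · intro u v huv
    fin_cases u <;> fin_cases v <;> simp_all <;> decide

private lemma modsub (n K L : ℕ) (hn : 5 ≤ n) (hK : K < n) (hL : L < n) :
    (n - L + K) % n = 1 ↔ (L + 1) % n = K := by
  rcases Nat.lt_or_ge K L with hKL | hKL
  · rw [Nat.mod_eq_of_lt (by omega : n - L + K < n)]
    rcases Nat.lt_or_ge (L + 1) n with hL1 | hL1
    · rw [Nat.mod_eq_of_lt hL1]; omega
    · have h2 : (L + 1) % n = 0 := by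
        have : L + 1 = n := by omega
        rw [this, Nat.mod_self]
      rw [h2]; omega
  · have hdec : n - L + K = n + (K - L) := by omega
    rw [hdec, Nat.add_mod_left, Nat.mod_eq_of_lt (by omega : K - L < n)]
    rcases Nat.lt_or_ge (L + 1) n with hL1 | hL1
    · rw [Nat.mod_eq_of_lt hL1]; omega
    · have h2 : (L + 1) % n = 0 := by
        have : L + 1 = n := by omega
        rw [this, Nat.mod_self]
      rw [h2]; omega

private lemma modne (n k d : ℕ) (hd : 0 < d) (hdn : d < n) : (k + d) % n ≠ k % n := by
  intro h
  have h2 : k % n = (k + d) % n := h.symm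
  have h3 : n ∣ (k + d) - k := (Nat.modEq_iff_dvd' (Nat.le_add_right k d)).mp h2
  simp only [Nat.add_sub_cancel_left] at h3
  exact absurd (Nat.le_of_dvd hd h3) (by omega)

/-- Let `G` be a (banner, C5)-free graph with an odd antihole `A` such that
no co-triangle of `G` contains two vertices of `A`.  Then for each co-triangle `C` whose
vertices all lie outside `A`, some vertex of `A` is adjacent to all three vertices of `C`. -/
theorem stmt_18 {V : Type*} [Fintype V] (G : SimpleGraph V)
    (hbf : BannerFree G) (hc5 : C5Free G)
    (A : Set V) (hA : IsOddAntihole G A)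
    (hno2 : ∀ t : Finset V, Gᶜ.IsNClique 3 t →
      ∀ a ∈ t, ∀ b ∈ t, a ∈ A → b ∈ A → a = b) :
    ∀ C : Finset V, Gᶜ.IsNClique 3 C → (∀ x ∈ C, x ∉ A) →
      ∃ v ∈ A, ∀ x ∈ C, G.Adj v x := by
  classical
  obtain ⟨n, hn5, hodd, ⟨iso⟩⟩ := hA
  intro C hC hCA
  by_contra hgoal
  push_neg at hgoal
  -- hgoal : ∀ v ∈ A, ∃ x ∈ C, ¬G.Adj v x
  have hn0 : 0 < n := by omega
  -- the antihole vertices, indexed by ℕ (mod n)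
  obtain ⟨a, ha⟩ : ∃ a : ℕ → V,
      ∀ k, a k = ((iso (⟨k % n, Nat.mod_lt k hn0⟩ : Fin n) : A) : V) := ⟨_, fun _ => rfl⟩
  have haA : ∀ k, a k ∈ A := by intro k; rw [ha]; exact (iso _).2
  have aeq : ∀ k l, a k = a l → k % n = l % n := by
    intro k l h
    rw [ha k, ha l] at h
    have h2 := iso.toEquiv.injective (Subtype.coe_injective h)
    exact congrArg Fin.val h2
  have key : ∀ k l : ℕ, G.Adj (a k) (a l) ↔
      (k % n ≠ l % n ∧ ¬((l + 1) % n = k % n ∨ (k + 1) % n = l % n)) := by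
    intro k l
    rw [ha k, ha l]
    have h1 : G.Adj ((iso (⟨k % n, Nat.mod_lt k hn0⟩ : Fin n) : A) : V)
        ((iso (⟨l % n, Nat.mod_lt l hn0⟩ : Fin n) : A) : V) ↔
        (cycleGraph n)ᶜ.Adj ⟨k % n, Nat.mod_lt k hn0⟩ ⟨l % n, Nat.mod_lt l hn0⟩ :=
      iso.map_adj_iff
    rw [h1, SimpleGraph.compl_adj]
    have h2 : ((⟨k % n, Nat.mod_lt k hn0⟩ : Fin n) ≠ ⟨l % n, Nat.mod_lt l hn0⟩) ↔
        k % n ≠ l % n := by simp [Fin.ext_iff]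
    have h3 : (cycleGraph n).Adj ⟨k % n, Nat.mod_lt k hn0⟩ ⟨l % n, Nat.mod_lt l hn0⟩ ↔
        ((l + 1) % n = k % n ∨ (k + 1) % n = l % n) := by
      rw [SimpleGraph.cycleGraph_adj']
      rw [Fin.sub_def, Fin.sub_def]
      rw [modsub n (k % n) (l % n) hn5 (Nat.mod_lt k hn0) (Nat.mod_lt l hn0)]
      rw [modsub n (l % n) (k % n) hn5 (Nat.mod_lt l hn0) (Nat.mod_lt k hn0)]
      have e : ∀ m : ℕ, (m + 1) % n = (m % n + 1) % n := by
        intro m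
        conv_lhs => rw [Nat.add_mod]
        rw [Nat.mod_eq_of_lt (by omega : 1 < n)]
      rw [← e l, ← e k]
    rw [h2, h3]
  -- basic adjacency facts about the antihole
  have aNe : ∀ k d, 0 < d → d < n → a k ≠ a (k + d) := by
    intro k d hd hdn h
    exact modne n k d hd hdn (aeq k (k + d) h).symm
  have aNadj1 : ∀ k, ¬ G.Adj (a k) (a (k + 1)) := by
    intro k h
    rw [key] at h
    exact h.2 (Or.inr rfl)
  have aAdj2 : ∀ k, G.Adj (a k) (a (k + 2)) := by
    intro k
    rw [key]
    refine ⟨fun h => modne n k 2 (by omega) (by omega) h.symm, ?_⟩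
    rintro (h | h)
    · exact modne n k 3 (by omega) (by omega) h
    · exact modne n (k + 1) 1 (by omega) (by omega) h.symm
  have aAdj3 : ∀ k, G.Adj (a k) (a (k + 3)) := by
    intro k
    rw [key]
    refine ⟨fun h => modne n k 3 (by omega) (by omega) h.symm, ?_⟩
    rintro (h | h)
    · exact modne n k 4 (by omega) (by omega) h
    · exact modne n (k + 1) 2 (by omega) (by omega) h.symm
  have aper : ∀ k, a (k + n) = a k := by
    intro k
    rw [ha, ha]
    congr 2
    exact Fin.ext (Nat.add_mod_right k n)
  -- the three co-triangle vertices
  obtain ⟨vx, vy, vz, hvxy, hvxz, hvyz, hCeq⟩ := Finset.card_eq_three.mp hC.2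
  obtain ⟨c, hc0, hc1, hc2⟩ : ∃ c : Fin 3 → V, c 0 = vx ∧ c 1 = vy ∧ c 2 = vz :=
    ⟨![vx, vy, vz], rfl, rfl, rfl⟩
  have hmemC : ∀ s : Fin 3, c s ∈ C := by
    intro s
    fin_cases s <;>
      first
        | (show c 0 ∈ C; rw [hc0, hCeq]; simp)
        | (show c 1 ∈ C; rw [hc1, hCeq]; simp)
        | (show c 2 ∈ C; rw [hc2, hCeq]; simp)
  have hsurj : ∀ x ∈ C, ∃ t : Fin 3, c t = x := by
    intro x hx
    rw [hCeq] at hx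
    simp only [Finset.mem_insert, Finset.mem_singleton] at hx
    rcases hx with rfl | rfl | rfl
    exacts [⟨0, hc0⟩, ⟨1, hc1⟩, ⟨2, hc2⟩]
  have hcinj : ∀ s t : Fin 3, s ≠ t → c s ≠ c t := by
    intro s t hst
    fin_cases s <;> fin_cases t <;>
      first
        | exact absurd rfl hst
        | (show c 0 ≠ c 1; rw [hc0, hc1]; exact hvxy)
        | (show c 0 ≠ c 2; rw [hc0, hc2]; exact hvxz)
        | (show c 1 ≠ c 2; rw [hc1, hc2]; exact hvyz)
        | (show c 1 ≠ c 0; rw [hc1, hc0]; exact hvxy.symm)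
        | (show c 2 ≠ c 0; rw [hc2, hc0]; exact hvxz.symm)
        | (show c 2 ≠ c 1; rw [hc2, hc1]; exact hvyz.symm)
  have hcnadj : ∀ s t : Fin 3, s ≠ t → ¬ G.Adj (c s) (c t) := by
    intro s t hst
    have h := hC.1 (Finset.mem_coe.mpr (hmemC s)) (Finset.mem_coe.mpr (hmemC t)) (hcinj s t hst)
    rw [SimpleGraph.compl_adj] at h
    exact h.2
  have hcA : ∀ s : Fin 3, c s ∉ A := fun s => hCA _ (hmemC s)
  have cune : ∀ (s : Fin 3) (k : ℕ), c s ≠ a k := by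
    intro s k h
    exact hcA s (by rw [h]; exact haA k)
  -- the non-neighborhood sets
  obtain ⟨M, hM⟩ : ∃ M : Fin 3 → ℕ → Prop, ∀ t k, M t k ↔ ¬ G.Adj (c t) (a k) :=
    ⟨_, fun _ _ => Iff.rfl⟩
  have hMn : ∀ t k, M t k → ¬ G.Adj (c t) (a k) := fun t k h => (hM t k).mp h
  have hM' : ∀ t k, ¬ M t k → G.Adj (c t) (a k) :=
    fun t k h => not_not.mp (fun hn => h ((hM t k).mpr hn))
  have hMper : ∀ t k, M t (k + n) ↔ M t k := by
    intro t k
    rw [hM, hM, aper]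
  -- (A) no two consecutive non-neighbours (co-triangle condition)
  have hA1 : ∀ t k, M t k → ¬ M t (k + 1) := by
    intro t k h1 h2
    have h1' := hMn t k h1
    have h2' := hMn t (k + 1) h2
    have d1 : c t ≠ a k := cune t k
    have d2 : c t ≠ a (k + 1) := cune t (k + 1)
    have d3 : a k ≠ a (k + 1) := aNe k 1 one_pos (by omega)
    have n3 : ¬ G.Adj (a k) (a (k + 1)) := aNadj1 k
    have hcl : Gᶜ.IsNClique 3 {c t, a k, a (k + 1)} := by
      constructor
      · intro p hp q hq hpq
        simp only [Finset.coe_insert, Set.mem_insert_iff, Finset.coe_singleton,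
          Set.mem_singleton_iff] at hp hq
        rw [SimpleGraph.compl_adj]
        refine ⟨hpq, ?_⟩
        rcases hp with rfl | rfl | rfl <;> rcases hq with rfl | rfl | rfl <;>
          first
            | exact absurd rfl hpq
            | exact h1' | exact h2' | exact n3
            | exact fun h => h1' h.symm
            | exact fun h => h2' h.symm
            | exact fun h => n3 h.symm
      · exact Finset.card_eq_three.mpr ⟨c t, a k, a (k + 1), d1, d2, d3, rfl⟩
    have heq := hno2 _ hcl (a k) (by simp) (a (k + 1)) (by simp) (haA k) (haA (k + 1))
    exact modne n k 1 one_pos (by omega) (aeq k (k + 1) heq).symm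
  -- (B) coverage
  have hB : ∀ k, ∃ t, M t k := by
    intro k
    obtain ⟨x0, hx0C, hnadj⟩ := hgoal (a k) (haA k)
    obtain ⟨t, rfl⟩ := hsurj x0 hx0C
    exact ⟨t, (hM t k).mpr (fun h => hnadj h.symm)⟩
  -- (C5 config 1, two outside vertices)
  have hC5c : ∀ s t : Fin 3, s ≠ t → ∀ p, M s (p + 2) → M t p → ¬ M s (p + 1) →
      ¬ M t (p + 1) → ¬ M t (p + 2) → ¬ M s p → False := by
    intro s t hst p hs2 ht0 hs1 ht1 ht2 hs0
    refine hc5 ⟨buildC5 G (c s) (a (p + 1)) (c t) (a (p + 2)) (a p)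
      (hM' s (p + 1) hs1) ((hM' t (p + 1) ht1).symm) (hM' t (p + 2) ht2)
      ((aAdj2 p).symm) ((hM' s p hs0).symm)
      (hcnadj s t hst) (hMn s (p + 2) hs2) (aNadj1 (p + 1))
      (fun h => aNadj1 p h.symm) (hMn t p ht0)
      (cune s (p + 1)) (hcinj s t hst) (cune s (p + 2)) (cune s p)
      ((cune t (p + 1)).symm) (aNe (p + 1) 1 (by omega) (by omega))
      ((aNe p 1 (by omega) (by omega)).symm)
      (cune t (p + 2)) (cune t p)
      ((aNe p 2 (by omega) (by omega)).symm)⟩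
  -- (C5 config 2, one outside vertex: no two non-neighbours at distance 3)
  have hF : ∀ s k, M s k → M s (k + 3) → False := by
    intro s k h0 h3'
    have h1' : ¬ M s (k + 1) := hA1 s k h0
    have h2' : ¬ M s (k + 2) := fun h => hA1 s (k + 2) h h3'
    refine hc5 ⟨buildC5 G (c s) (a (k + 1)) (a (k + 3)) (a k) (a (k + 2))
      (hM' s (k + 1) h1') (aAdj2 (k + 1)) ((aAdj3 k).symm) (aAdj2 k)
      ((hM' s (k + 2) h2').symm)
      (hMn s (k + 3) h3') (hMn s k h0) (fun h => aNadj1 k h.symm)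
      (aNadj1 (k + 1)) (fun h => aNadj1 (k + 2) h.symm)
      (cune s (k + 1)) (cune s (k + 3)) (cune s k) (cune s (k + 2))
      (aNe (k + 1) 2 (by omega) (by omega)) ((aNe k 1 (by omega) (by omega)).symm)
      (aNe (k + 1) 1 (by omega) (by omega)) ((aNe k 3 (by omega) (by omega)).symm)
      ((aNe (k + 2) 1 (by omega) (by omega)).symm) (aNe k 2 (by omega) (by omega))⟩
  -- (banner config)
  have hBan : ∀ s t : Fin 3, s ≠ t → ∀ j, ¬ M s j → ¬ M s (j + 1) → M s (j + 3) →
      ¬ M t j → M t (j + 1) → M t (j + 3) → False := by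
    intro s t hst j hs0 hs1 hs3 ht0 ht1 ht3
    refine hbf ⟨buildBanner G (a j) (c s) (a (j + 1)) (a (j + 3)) (c t)
      ((hM' s j hs0).symm) (hM' s (j + 1) hs1) (aAdj2 (j + 1)) ((aAdj3 j).symm)
      ((hM' t j ht0).symm)
      (aNadj1 j) (hMn s (j + 3) hs3) (hcnadj s t hst)
      (fun h => hMn t (j + 1) ht1 h.symm) (fun h => hMn t (j + 3) ht3 h.symm)
      ((cune s j).symm) (aNe j 1 (by omega) (by omega)) (aNe j 3 (by omega) (by omega))
      ((cune t j).symm) (cune s (j + 1)) (cune s (j + 3)) (hcinj s t hst)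
      (aNe (j + 1) 2 (by omega) (by omega)) ((cune t (j + 1)).symm)
      ((cune t (j + 3)).symm)⟩
  -- pure combinatorics on the odd cycle from here on
  have third : ∀ u v : Fin 3, u ≠ v →
      ∃ w : Fin 3, w ≠ u ∧ w ≠ v ∧ ∀ t : Fin 3, t = u ∨ t = v ∨ t = w := by decide
  by_cases hdou : ∃ k u v, u ≠ v ∧ M u k ∧ M v k
  · -- a doubly-covered index exists
    obtain ⟨k0, u, v, huv, hu0, hv0⟩ := hdou
    obtain ⟨w, hwu, hwv, hall⟩ := third u v huv
    have dstep : ∀ j, M u (j + 3) → M v (j + 3) → M u (j + 1) ∧ M v (j + 1) := by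
      intro j hu3 hv3
      have hnu2 : ¬ M u (j + 2) := fun h => hA1 u (j + 2) h hu3
      have hnv2 : ¬ M v (j + 2) := fun h => hA1 v (j + 2) h hv3
      have hw2 : M w (j + 2) := by
        obtain ⟨t, ht⟩ := hB (j + 2)
        rcases hall t with rfl | rfl | rfl
        · exact absurd ht hnu2
        · exact absurd ht hnv2
        · exact ht
      have hnu0 : ¬ M u j := fun h => hF u j h hu3
      have hnv0 : ¬ M v j := fun h => hF v j h hv3
      have hnw1 : ¬ M w (j + 1) := fun h => hA1 w (j + 1) h hw2
      have h1mem : M u (j + 1) ∨ M v (j + 1) := by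
        obtain ⟨t, ht⟩ := hB (j + 1)
        rcases hall t with rfl | rfl | rfl
        · exact Or.inl ht
        · exact Or.inr ht
        · exact absurd ht hnw1
      rcases h1mem with h | h
      · refine ⟨h, ?_⟩
        by_contra hv1
        exact hBan v u huv.symm j hnv0 hv1 hv3 hnu0 h hu3
      · refine ⟨?_, h⟩
        by_contra hu1
        exact hBan u v huv j hnu0 hu1 hu3 hnv0 h hv3
    have dprop : ∀ d j, M u (j + 3 + 2 * d) → M v (j + 3 + 2 * d) →
        M u (j + 3) ∧ M v (j + 3) := by
      intro d
      induction d with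
      | zero => intro j h1 h2; exact ⟨by simpa using h1, by simpa using h2⟩
      | succ d ih =>
        intro j h1 h2
        have e : j + 3 + 2 * (d + 1) = (j + 2) + 3 + 2 * d := by ring
        rw [e] at h1 h2
        obtain ⟨hh1, hh2⟩ := ih (j + 2) h1 h2
        exact dstep (j + 2) hh1 hh2
    have hper2 : M u (k0 + n + n) ∧ M v (k0 + n + n) :=
      ⟨(hMper u (k0 + n)).mpr ((hMper u k0).mpr hu0),
       (hMper v (k0 + n)).mpr ((hMper v k0).mpr hv0)⟩
    obtain ⟨e, he⟩ := hodd
    have he2 : 2 ≤ e := by omega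
    have e3 : k0 + n + n = (k0 + 2 * (e - 1) + 1) + 3 + 2 * e := by omega
    rw [e3] at hper2
    obtain ⟨hd1, hd2⟩ := dprop e (k0 + 2 * (e - 1) + 1) hper2.1 hper2.2
    have e4 : k0 + 2 * (e - 1) + 1 + 3 = (k0 + 1) + n := by omega
    rw [e4] at hd1
    exact hA1 u k0 hu0 ((hMper u (k0 + 1)).mp hd1)
  · -- every index is covered by exactly one of the three sets
    have hsin : ∀ k u v, M u k → M v k → u = v := by
      intro k u v h1 h2
      by_contra hne
      exact hdou ⟨k, u, v, hne, h1, h2⟩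
    choose f hf using hB
    have hstep : ∀ p, f (p + 2) = f p := by
      intro p
      by_contra hne
      refine hC5c (f (p + 2)) (f p) hne p (hf (p + 2)) (hf p) ?_ ?_ ?_ ?_
      · intro h; exact hA1 _ _ h (hf (p + 2))
      · intro h; exact hA1 _ _ (hf p) h
      · intro h; exact hne (hsin (p + 2) _ _ (hf (p + 2)) h)
      · intro h; exact hne (hsin p _ _ h (hf p))
    have hind : ∀ d p, f (p + 2 * d) = f p := by
      intro d
      induction d with
      | zero => intro p; norm_num
      | succ d ih =>
        intro p
        have e : p + 2 * (d + 1) = (p + 2) + 2 * d := by ring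
        rw [e, ih (p + 2), hstep p]
    have hperf : ∀ k, f (k + n) = f k := by
      intro k
      exact hsin k _ _ ((hMper _ k).mp (hf (k + n))) (hf k)
    obtain ⟨e, he⟩ := hodd
    have h01 : f 1 = f 0 := by
      have t1 := hind (e + 1) 0
      have e6 : 0 + 2 * (e + 1) = 1 + n := by omega
      rw [e6, hperf 1] at t1
      exact t1
    exact hA1 (f 0) 0 (hf 0) (h01 ▸ hf 1)
end

section
/- Let G be a banner-free graph, let T be the set of all vertices of G that belong to some co-triangle of G, let C be a co-triangle of G, and let v and x be two vertices of G not in T. If v is adjacent to all three vertices of C and x is not adjacent to v, then x is adjacent to all three vertices of C. -/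
open SimpleGraph

/-!
If `x` missed some `c ∈ C`, it would have to see the two other vertices `d, e` of `C`, since
otherwise `x, c` and that vertex would form a co-triangle through `x`. Then `v d x e` is an
induced 4-cycle and `c`, adjacent to `v` only, turns it into a banner.
-/

namespace BannerFree

variable {V : Type*} {G : SimpleGraph V}

theorem false_of_induced_banner (hG : BannerFree G) {a b c d e : V}
    (hab : G.Adj a b) (hbc : G.Adj b c) (hcd : G.Adj c d) (hda : G.Adj d a) (hae : G.Adj a e)
    (hac : ¬ G.Adj a c) (hbd : ¬ G.Adj b d) (hbe : ¬ G.Adj b e) (hce : ¬ G.Adj c e)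
    (hde : ¬ G.Adj d e) (hbd' : b ≠ d) : False := by
  have hac' : a ≠ c := by rintro rfl; exact hce hae
  have hbe' : b ≠ e := by rintro rfl; exact hce hbc.symm
  have hce' : c ≠ e := by rintro rfl; exact hac hae
  have hde' : d ≠ e := by rintro rfl; exact hce hcd
  have hinj : Function.Injective ![a, b, c, d, e] := by
    intro i j h
    fin_cases i <;> fin_cases j <;> simp at h ⊢ <;> grind [G.ne_of_adj]
  refine hG ⟨⟨⟨_, hinj⟩, fun {i j} => ?_⟩⟩
  fin_cases i <;> fin_cases j <;> simp [banner] <;> grind [G.adj_comm]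

end BannerFree

namespace SimpleGraph

variable {V : Type*} {G : SimpleGraph V}

theorem adj_of_notMem_coTriangles {x c p : V}
    (hx : ∀ t : Finset V, Gᶜ.IsNClique 3 t → x ∉ t) (hxc : x ≠ c) (hxp : x ≠ p) (hcp : c ≠ p)
    (hxc' : ¬ G.Adj x c) (hcp' : ¬ G.Adj c p) : G.Adj x p := by
  classical
  by_contra hxp'
  refine hx {x, c, p} ?_ (Finset.mem_insert_self x _)
  rw [is3Clique_triple_iff, compl_adj, compl_adj, compl_adj]
  exact ⟨⟨hxc, hxc'⟩, ⟨hxp, hxp'⟩, ⟨hcp, hcp'⟩⟩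

end SimpleGraph

theorem stmt_19_general {V : Type*} (G : SimpleGraph V)
    (hbf : BannerFree G)
    (T : Set V) (hT : T = {v : V | ∃ t : Finset V, Gᶜ.IsNClique 3 t ∧ v ∈ t})
    (C : Finset V) (hC : Gᶜ.IsNClique 3 C)
    (v x : V) (hx : x ∉ T)
    (hvC : ∀ c ∈ C, G.Adj v c) (hxv : ¬ G.Adj x v) :
    ∀ c ∈ C, G.Adj x c := by
  classical
  subst hT
  have hxT : ∀ t : Finset V, Gᶜ.IsNClique 3 t → x ∉ t := fun t ht hxt => hx ⟨t, ht, hxt⟩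
  have hxC : x ∉ C := hxT C hC
  have hC_stable : ∀ p ∈ C, ∀ q ∈ C, p ≠ q → ¬ G.Adj p q := fun p hp q hq hpq =>
    (compl_adj G p q).mp (hC.1 hp hq hpq) |>.2
  intro c hc
  by_contra hxc
  have hCc : 1 < (C.erase c).card := by rw [Finset.card_erase_of_mem hc, hC.2]; decide
  obtain ⟨d, e, hd, he, hde⟩ := Finset.one_lt_card_iff.mp hCc
  obtain ⟨hdc, hd⟩ := Finset.mem_erase.mp hd
  obtain ⟨hec, he⟩ := Finset.mem_erase.mp he
  have hxo : ∀ p ∈ C, p ≠ c → G.Adj x p := fun p hp hpc =>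
    adj_of_notMem_coTriangles hxT (ne_of_mem_of_not_mem hc hxC).symm
      (ne_of_mem_of_not_mem hp hxC).symm hpc.symm hxc (hC_stable c hc p hp hpc.symm)
  exact hbf.false_of_induced_banner (hvC d hd) (hxo d hd hdc).symm (hxo e he hec) (hvC e he).symm
    (hvC c hc) (fun h => hxv h.symm) (hC_stable d hd e he hde)
    (hC_stable d hd c hc hdc) hxc
    (hC_stable e he c hc hec) hde

/-- Let `G` be a banner-free graph, let `T` be the set of vertices of `G`
belonging to some co-triangle, let `C` be a co-triangle of `G`, and let `v, x ∉ T`.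
If `v` is adjacent to all three vertices of `C` and `x` is not adjacent to `v`, then `x`
is adjacent to all three vertices of `C`. -/
theorem stmt_19 {V : Type*} [Fintype V] (G : SimpleGraph V)
    (hbf : BannerFree G)
    (T : Set V) (hT : T = {v : V | ∃ t : Finset V, Gᶜ.IsNClique 3 t ∧ v ∈ t})
    (C : Finset V) (hC : Gᶜ.IsNClique 3 C)
    (v x : V) (hv : v ∉ T) (hx : x ∉ T)
    (hvC : ∀ c ∈ C, G.Adj v c) (hxv : ¬ G.Adj x v) :
    ∀ c ∈ C, G.Adj x c :=
  stmt_19_general G hbf T hT C hC v x hx hvC hxv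
end
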